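/- Let B be a Banach algebra whose canonical image is a right ideal in (B**,□), and let X = B* be the right Banach B-module with the natural action ⟨xφ, ψ⟩ = ⟨x, φψ⟩ (x∈B*, φ,ψ∈B). Then the canonical image of the Banach algebra B_X = B* ⊕₁ B, with product (x,φ)(y,ψ) = (xψ, φψ), is a right ideal in (B_X)** (first Arens product) if and only if B is Arens regular. -/

import Mathlib

/-! For a right `A`-module `X`, the product on `A_X = X ⊕ A` makes `F·(x, a)` depend only on the
`A`-coordinate, so `ι(x, a) □ M` only sees the `A**`-component `n` of `M` and corresponds to
`(ι(x)·n, ι(a) □ n) ∈ X** × A**`. Hence `ι(A_X)` is a right ideal in `A_X**` iff `ι(A)` is a right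
ideal in `A**` and every `ι(x)·n` lies in `ι(X)`. For `X = A*` one has `⟨ι(x)·n, g⟩ = ⟨n □ g, x⟩`;
testing against `g = ι(φ)` shows that the only candidate preimage is `x·n`, and
`⟨g, x·n⟩ = ⟨n ◇ g, x⟩`, so this holds for all `x, n` exactly when `A` is Arens regular. -/

noncomputable section

open NormedSpace Filter Topology

namespace ArensNote

variable {X A : Type*} [NormedAddCommGroup X] [NormedSpace ℂ X]
  [NormedAddCommGroup A] [NormedSpace ℂ A]

/-- The bidual of a normed space. -/
abbrev Bidual (E : Type*) [NormedAddCommGroup E] [NormedSpace ℂ E] :=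
  StrongDual ℂ (StrongDual ℂ E)

/-- The canonical embedding of a normed space into its bidual. -/
abbrev iota (E : Type*) [NormedAddCommGroup E] [NormedSpace ℂ E] :
    E →L[ℂ] Bidual E :=
  inclusionInDoubleDual ℂ E

section action

variable (sm : X →L[ℂ] A →L[ℂ] X)

/-- First adjoint of a (right) module action `sm` of `A` on `X`:
`⟨fodot sm f x, φ⟩ = ⟨f, x·φ⟩`. -/
def fodot (f : StrongDual ℂ X) (x : X) : StrongDual ℂ A :=
  f.comp (sm x)

@[simp] lemma fodot_apply (f : StrongDual ℂ X) (x : X) (φ : A) :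
    fodot sm f x φ = f (sm x φ) := rfl

lemma fodot_add (f g : StrongDual ℂ X) (x : X) :
    fodot sm (f + g) x = fodot sm f x + fodot sm g x := by
  ext φ; simp

lemma fodot_smul (c : ℂ) (f : StrongDual ℂ X) (x : X) :
    fodot sm (c • f) x = c • fodot sm f x := by
  ext φ; simp

lemma fodot_norm_le (f : StrongDual ℂ X) (x : X) :
    ‖fodot sm f x‖ ≤ ‖f‖ * (‖sm‖ * ‖x‖) :=
  le_trans (ContinuousLinearMap.opNorm_comp_le f (sm x))
    (mul_le_mul_of_nonneg_left (sm.le_opNorm x) (norm_nonneg f))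

/-- Second adjoint of the module action: `⟨mdot sm m f, x⟩ = ⟨m, f ⊙ x⟩`. -/
def mdot (m : Bidual A) (f : StrongDual ℂ X) : StrongDual ℂ X :=
  LinearMap.mkContinuous
    { toFun := fun x => m (fodot sm f x)
      map_add' := by
        intro x y
        have h : fodot sm f (x + y) = fodot sm f x + fodot sm f y := by
          ext φ; simp
        show m (fodot sm f (x + y)) = m (fodot sm f x) + m (fodot sm f y)
        rw [h, map_add]
      map_smul' := by
        intro c x
        have h : fodot sm f (c • x) = c • fodot sm f x := by
          ext φ; simp
        show m (fodot sm f (c • x)) = (RingHom.id ℂ) c • m (fodot sm f x)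
        rw [h, map_smul, RingHom.id_apply] }
    (‖m‖ * ‖f‖ * ‖sm‖)
    (fun x => by
      calc ‖m (fodot sm f x)‖ ≤ ‖m‖ * ‖fodot sm f x‖ := m.le_opNorm _
        _ ≤ ‖m‖ * (‖f‖ * (‖sm‖ * ‖x‖)) :=
            mul_le_mul_of_nonneg_left (fodot_norm_le sm f x) (norm_nonneg m)
        _ = ‖m‖ * ‖f‖ * ‖sm‖ * ‖x‖ := by ring)

@[simp] lemma mdot_apply (m : Bidual A) (f : StrongDual ℂ X) (x : X) :
    mdot sm m f x = m (fodot sm f x) := rfl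

lemma mdot_add (m : Bidual A) (f g : StrongDual ℂ X) :
    mdot sm m (f + g) = mdot sm m f + mdot sm m g := by
  ext x; simp [fodot_add, map_add]

lemma mdot_smul (m : Bidual A) (c : ℂ) (f : StrongDual ℂ X) :
    mdot sm m (c • f) = c • mdot sm m f := by
  ext x; simp [fodot_smul, map_smul]

lemma mdot_norm_le (m : Bidual A) (f : StrongDual ℂ X) :
    ‖mdot sm m f‖ ≤ ‖m‖ * ‖f‖ * ‖sm‖ :=
  LinearMap.mkContinuous_norm_le _ (by positivity) _

/-- The bidual module action : `⟨modAct sm p m, f⟩ = ⟨p, m · f⟩`. -/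
def modAct (p : Bidual X) (m : Bidual A) : Bidual X :=
  LinearMap.mkContinuous
    { toFun := fun f => p (mdot sm m f)
      map_add' := by
        intro f g
        show p (mdot sm m (f + g)) = p (mdot sm m f) + p (mdot sm m g)
        rw [mdot_add, map_add]
      map_smul' := by
        intro c f
        show p (mdot sm m (c • f)) = (RingHom.id ℂ) c • p (mdot sm m f)
        rw [mdot_smul, map_smul, RingHom.id_apply] }
    (‖p‖ * ‖m‖ * ‖sm‖)
    (fun f => by
      calc ‖p (mdot sm m f)‖ ≤ ‖p‖ * ‖mdot sm m f‖ := p.le_opNorm _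
        _ ≤ ‖p‖ * (‖m‖ * ‖f‖ * ‖sm‖) :=
            mul_le_mul_of_nonneg_left (mdot_norm_le sm m f) (norm_nonneg p)
        _ = ‖p‖ * ‖m‖ * ‖sm‖ * ‖f‖ := by ring)

@[simp] lemma modAct_apply (p : Bidual X) (m : Bidual A) (f : StrongDual ℂ X) :
    modAct sm p m f = p (mdot sm m f) := rfl

end action

section algebra

variable (mA : A →L[ℂ] A →L[ℂ] A)

/-- The first Arens product on the bidual:
`⟨m □ n, f⟩ = ⟨m, n·f⟩`, `⟨n·f, φ⟩ = ⟨n, f·φ⟩`, `⟨f·φ, ψ⟩ = ⟨f, φψ⟩`. -/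
def arens1 (m n : Bidual A) : Bidual A := modAct mA m n

/-- The second Arens product on the bidual:
`⟨m ◇ n, f⟩ = ⟨n, f·m⟩`, `⟨f·m, φ⟩ = ⟨m, φ·f⟩`, `⟨φ·f, ψ⟩ = ⟨f, ψφ⟩`. -/
def arens2 (m n : Bidual A) : Bidual A := modAct mA.flip n m

/-- A Banach algebra is Arens regular when the two Arens products coincide. -/
def ArensRegular : Prop :=
  ∀ m n : Bidual A, arens1 mA m n = arens2 mA m n

/-- The weakly almost periodic functionals on `A`. -/
def WAP : Set (StrongDual ℂ A) :=
  {f | ∀ m n : Bidual A, arens1 mA m n f = arens2 mA m n f}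

/-- `e` is a mixed identity: a right identity for the first Arens product and a
left identity for the second Arens product. -/
def IsMixedIdentity (e : Bidual A) : Prop :=
  (∀ m : Bidual A, arens1 mA m e = m) ∧ ∀ m : Bidual A, arens2 mA e m = m

/-- `mA` makes `A` into a (non-unital) Banach algebra. -/
structure IsBanachAlgebra : Prop where
  mul_assoc : ∀ a b c : A, mA (mA a b) c = mA a (mA b c)
  norm_mul_le : ∀ a b : A, ‖mA a b‖ ≤ ‖a‖ * ‖b‖

/-- `J` is a two-sided ideal for the multiplication `mA`. -/
def IsTwoSidedIdeal (J : Set A) : Prop :=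
  ∀ a b : A, a ∈ J → mA a b ∈ J ∧ mA b a ∈ J

/-- `A` has a contractive (two-sided) approximate identity. -/
def HasCAI : Prop :=
  ∃ l : Filter A, l.NeBot ∧ (∀ᶠ x in l, ‖x‖ ≤ 1) ∧
    (∀ a : A, Tendsto (fun x => mA x a) l (𝓝 a)) ∧
    ∀ a : A, Tendsto (fun x => mA a x) l (𝓝 a)

/-- `A` has a bounded (two-sided) approximate identity. -/
def HasBAI : Prop :=
  ∃ l : Filter A, l.NeBot ∧ (∃ C : ℝ, ∀ᶠ x in l, ‖x‖ ≤ C) ∧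
    (∀ a : A, Tendsto (fun x => mA x a) l (𝓝 a)) ∧
    ∀ a : A, Tendsto (fun x => mA a x) l (𝓝 a)

/-- `A` has a bounded right approximate identity. -/
def HasBRAI : Prop :=
  ∃ l : Filter A, l.NeBot ∧ (∃ C : ℝ, ∀ᶠ x in l, ‖x‖ ≤ C) ∧
    ∀ a : A, Tendsto (fun x => mA a x) l (𝓝 a)

/-- `A` has a bounded left approximate identity. -/
def HasBLAI : Prop :=
  ∃ l : Filter A, l.NeBot ∧ (∃ C : ℝ, ∀ᶠ x in l, ‖x‖ ≤ C) ∧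
    ∀ a : A, Tendsto (fun x => mA x a) l (𝓝 a)

end algebra

/-- The annihilator `S^⊥ ⊆ A*` of a subset `S ⊆ A`. -/
def perp (S : Set A) : Set (StrongDual ℂ A) := {f | ∀ a ∈ S, f a = 0}

/-- The annihilator in the bidual of a set of functionals. -/
def perp' (S : Set (StrongDual ℂ A)) : Set (Bidual A) := {m | ∀ f ∈ S, m f = 0}

/-- `A` is weakly sequentially complete. -/
def WeaklySequentiallyComplete (E : Type*) [NormedAddCommGroup E] [NormedSpace ℂ E] : Prop :=
  ∀ x : ℕ → E,
    (∀ f : StrongDual ℂ E, ∃ c : ℂ, Tendsto (fun n => f (x n)) atTop (𝓝 c)) →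
    ∃ a : E, ∀ f : StrongDual ℂ E, Tendsto (fun n => f (x n)) atTop (𝓝 (f a))

/-- The restriction map `A* → J*`, adjoint of the inclusion `J → A`. -/
def restrictDual (J : Submodule ℂ A) : StrongDual ℂ A →L[ℂ] StrongDual ℂ ↥J :=
  (ContinuousLinearMap.compL ℂ ↥J A ℂ).flip J.subtypeL

@[simp] lemma restrictDual_apply (J : Submodule ℂ A) (f : StrongDual ℂ A) (x : ↥J) :
    restrictDual J f x = f x := rfl

/-- The second adjoint `J** → A**` of the inclusion of a closed subspace `J` into `A`. -/
def bidualTrans (J : Submodule ℂ A) (m : Bidual ↥J) : Bidual A :=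
  m.comp (restrictDual J)

@[simp] lemma bidualTrans_apply (J : Submodule ℂ A) (m : Bidual ↥J) (f : StrongDual ℂ A) :
    bidualTrans J m f = m (restrictDual J f) := rfl

/-- The subspace `X × {0}` of the `ℓ¹`-direct sum `X ⊕₁ B`. -/
def sndZero (X B : Type*) [NormedAddCommGroup X] [NormedSpace ℂ X]
    [NormedAddCommGroup B] [NormedSpace ℂ B] : Submodule ℂ (WithLp 1 (X × B)) :=
  (Submodule.prod (⊤ : Submodule ℂ X) (⊥ : Submodule ℂ B)).comap
    (WithLp.linearEquiv 1 ℂ (X × B)).toLinearMap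

open WithLp ContinuousLinearMap

def dualMap {E F : Type*} [NormedAddCommGroup E] [NormedSpace ℂ E]
    [NormedAddCommGroup F] [NormedSpace ℂ F] (T : E →L[ℂ] F) :
    StrongDual ℂ F →L[ℂ] StrongDual ℂ E :=
  (compL ℂ E F ℂ).flip T

@[simp] lemma dualMap_apply {E F : Type*} [NormedAddCommGroup E] [NormedSpace ℂ E]
    [NormedAddCommGroup F] [NormedSpace ℂ F] (T : E →L[ℂ] F) (f : StrongDual ℂ F) :
    dualMap T f = f ∘L T := rfl

section dualModule

variable {mA : A →L[ℂ] A →L[ℂ] A} {sm : StrongDual ℂ A →L[ℂ] A →L[ℂ] StrongDual ℂ A}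

lemma modAct_iota_dual_apply (hsm : ∀ (x : StrongDual ℂ A) (φ ψ : A), sm x φ ψ = x (mA φ ψ))
    (x : StrongDual ℂ A) (n g : Bidual A) :
    modAct sm (iota _ x) n g = arens1 mA n g x := by
  have hfodot : fodot sm g x = mdot mA g x := by
    ext ψ
    change g (sm x ψ) = g (fodot mA x ψ)
    congr 1
    ext φ
    exact hsm x ψ φ
  exact congrArg n hfodot

theorem arensRegular_iff_modAct_iota_mem_range
    (hsm : ∀ (x : StrongDual ℂ A) (φ ψ : A), sm x φ ψ = x (mA φ ψ)) :
    ArensRegular mA ↔ ∀ (x : StrongDual ℂ A) (n : Bidual A),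
      modAct sm (iota _ x) n ∈ Set.range (iota (StrongDual ℂ A)) := by
  constructor
  · intro hreg x n
    refine ⟨mdot mA.flip n x, ?_⟩
    ext g
    rw [modAct_iota_dual_apply hsm, hreg]
    rfl
  · intro hrange m n
    ext x
    obtain ⟨y, hy⟩ := hrange x m
    have hy_eq : y = mdot mA.flip m x := by
      ext φ
      calc y φ = modAct sm (iota _ x) m (iota A φ) := by rw [← hy]; rfl
        _ = mdot mA.flip m x φ := modAct_iota_dual_apply hsm x m (iota A φ)
    calc arens1 mA m n x = modAct sm (iota _ x) m n := (modAct_iota_dual_apply hsm x m n).symm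
      _ = arens2 mA m n x := by rw [← hy, hy_eq]; rfl

end dualModule

section semidirectSum

variable (p : ENNReal)

def inlL : X →L[ℂ] WithLp p (X × A) :=
  (prodContinuousLinearEquiv p ℂ X A).symm.toContinuousLinearMap ∘L ContinuousLinearMap.inl ℂ X A

def inrL : A →L[ℂ] WithLp p (X × A) :=
  (prodContinuousLinearEquiv p ℂ X A).symm.toContinuousLinearMap ∘L ContinuousLinearMap.inr ℂ X A

variable {p}

@[simp] lemma inlL_apply (x : X) : inlL (A := A) p x = toLp p (x, 0) := rfl

@[simp] lemma inrL_apply (a : A) : inrL (X := X) p a = toLp p (0, a) := rfl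

lemma inlL_add_inrL (x : X) (a : A) : inlL p x + inrL p a = toLp p (x, a) := by
  simp [← toLp_add]

lemma inlL_fst_add_inrL_snd (w : WithLp p (X × A)) : inlL p w.fst + inrL p w.snd = w :=
  inlL_add_inrL w.fst w.snd

@[simp] lemma fstL_comp_inlL : fstL p ℂ X A ∘L inlL p = .id ℂ X := rfl

@[simp] lemma fstL_comp_inrL : fstL p ℂ X A ∘L inrL p = 0 := rfl

@[simp] lemma sndL_comp_inlL : sndL p ℂ X A ∘L inlL p = 0 := rfl

@[simp] lemma sndL_comp_inrL : sndL p ℂ X A ∘L inrL p = .id ℂ A := rfl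

variable (p) [Fact (1 ≤ p)]

/-- The identification `X** × A** ≃ (X ⊕ A)**`. -/
def bidualProd (P : Bidual X) (N : Bidual A) : Bidual (WithLp p (X × A)) :=
  dualMap (dualMap (inlL p)) P + dualMap (dualMap (inrL p)) N

variable {p}

@[simp] lemma bidualProd_apply (P : Bidual X) (N : Bidual A)
    (F : StrongDual ℂ (WithLp p (X × A))) :
    bidualProd p P N F = P (F ∘L inlL p) + N (F ∘L inrL p) := rfl

lemma bidualProd_mem_range_iota_iff (P : Bidual X) (N : Bidual A) :
    bidualProd p P N ∈ Set.range (iota _) ↔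
      P ∈ Set.range (iota X) ∧ N ∈ Set.range (iota A) := by
  constructor
  · rintro ⟨w, hw⟩
    refine ⟨⟨w.fst, ?_⟩, ⟨w.snd, ?_⟩⟩
    · ext g
      simpa [comp_assoc] using congrArg (fun Φ => Φ (g ∘L fstL p ℂ X A)) hw
    · ext f
      simpa [comp_assoc] using congrArg (fun Φ => Φ (f ∘L sndL p ℂ X A)) hw
  · rintro ⟨⟨x, rfl⟩, ⟨a, rfl⟩⟩
    refine ⟨toLp p (x, a), ?_⟩
    ext F
    rw [bidualProd_apply, ← inlL_add_inrL, map_add]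
    rfl

variable {sm : X →L[ℂ] A →L[ℂ] X} {mA : A →L[ℂ] A →L[ℂ] A}
  {mAX : WithLp p (X × A) →L[ℂ] WithLp p (X × A) →L[ℂ] WithLp p (X × A)}

lemma fodot_semidirectSum
    (hmAX : ∀ u v, ofLp (mAX u v) = (sm u.fst v.snd, mA u.snd v.snd))
    (F : StrongDual ℂ (WithLp p (X × A))) (u : WithLp p (X × A)) :
    fodot mAX F u = dualMap (sndL p ℂ X A)
      (fodot sm (F ∘L inlL p) u.fst + fodot mA (F ∘L inrL p) u.snd) := by
  ext v
  have hfst : (mAX u v).fst = sm u.fst v.snd := congrArg Prod.fst (hmAX u v)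
  have hsnd : (mAX u v).snd = mA u.snd v.snd := congrArg Prod.snd (hmAX u v)
  rw [fodot_apply, ← inlL_fst_add_inrL_snd (mAX u v), map_add, hfst, hsnd]
  rfl

lemma arens1_iota_semidirectSum
    (hmAX : ∀ u v, ofLp (mAX u v) = (sm u.fst v.snd, mA u.snd v.snd))
    (u : WithLp p (X × A)) (M : Bidual (WithLp p (X × A))) :
    arens1 mAX (iota _ u) M =
      bidualProd p (modAct sm (iota X u.fst) (dualMap (dualMap (sndL p ℂ X A)) M))
        (arens1 mA (iota A u.snd) (dualMap (dualMap (sndL p ℂ X A)) M)) := by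
  ext F
  change M (fodot mAX F u) = _
  rw [fodot_semidirectSum hmAX, dualMap_apply, add_comp, map_add]
  rfl

lemma dualMap_dualMap_sndL_inrL (n : Bidual A) :
    dualMap (dualMap (sndL p ℂ X A)) (dualMap (dualMap (inrL p)) n) = n := by
  ext f
  change n ((f ∘L sndL p ℂ X A) ∘L inrL p) = n f
  congr 1

theorem iota_rightIdeal_semidirectSum_iff
    (hmAX : ∀ u v, ofLp (mAX u v) = (sm u.fst v.snd, mA u.snd v.snd)) :
    (∀ (u : WithLp p (X × A)) (M : Bidual (WithLp p (X × A))),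
        arens1 mAX (iota _ u) M ∈ Set.range (iota _)) ↔
      (∀ (x : X) (n : Bidual A), modAct sm (iota X x) n ∈ Set.range (iota X)) ∧
        ∀ (a : A) (n : Bidual A), arens1 mA (iota A a) n ∈ Set.range (iota A) := by
  constructor
  · intro H
    have hboth : ∀ x a n, modAct sm (iota X x) n ∈ Set.range (iota X) ∧
        arens1 mA (iota A a) n ∈ Set.range (iota A) := by
      intro x a n
      have := H (toLp p (x, a)) (dualMap (dualMap (inrL p)) n)
      rwa [arens1_iota_semidirectSum hmAX, dualMap_dualMap_sndL_inrL,
        bidualProd_mem_range_iota_iff] at this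
    exact ⟨fun x n => (hboth x 0 n).1, fun a n => (hboth 0 a n).2⟩
  · rintro ⟨hX, hA⟩ u M
    rw [arens1_iota_semidirectSum hmAX, bidualProd_mem_range_iota_iff]
    exact ⟨hX _ _, hA _ _⟩

end semidirectSum

theorem statement16_general
    {B : Type*} [NormedAddCommGroup B] [NormedSpace ℂ B]
    (mB : B →L[ℂ] B →L[ℂ] B)
    (hBrideal : ∀ (b : B) (m : Bidual B), arens1 mB (iota B b) m ∈ Set.range (iota B))
    -- the natural right action of `B` on `X = B*`:
    (sm : StrongDual ℂ B →L[ℂ] B →L[ℂ] StrongDual ℂ B)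
    (hsm : ∀ (x : StrongDual ℂ B) (φ ψ : B), sm x φ ψ = x (mB φ ψ))
    (mBX : WithLp 1 (StrongDual ℂ B × B) →L[ℂ] WithLp 1 (StrongDual ℂ B × B) →L[ℂ]
      WithLp 1 (StrongDual ℂ B × B))
    (hmBX : ∀ u v : WithLp 1 (StrongDual ℂ B × B),
      WithLp.equiv 1 (StrongDual ℂ B × B) (mBX u v) =
        (sm (WithLp.equiv 1 (StrongDual ℂ B × B) u).1 (WithLp.equiv 1 (StrongDual ℂ B × B) v).2,
         mB (WithLp.equiv 1 (StrongDual ℂ B × B) u).2 (WithLp.equiv 1 (StrongDual ℂ B × B) v).2)) :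
    (∀ (u : WithLp 1 (StrongDual ℂ B × B)) (m : Bidual (WithLp 1 (StrongDual ℂ B × B))),
      arens1 mBX (iota (WithLp 1 (StrongDual ℂ B × B)) u) m
        ∈ Set.range (iota (WithLp 1 (StrongDual ℂ B × B))))
      ↔ ArensRegular mB := by
  rw [iota_rightIdeal_semidirectSum_iff hmBX, ← arensRegular_iff_modAct_iota_mem_range hsm]
  exact and_iff_left hBrideal

/-- Let `B` be a Banach algebra whose canonical image is a right
ideal in `(B**, □)`, and let `X = B*` be the right Banach `B`-module with the natural
action `⟨xφ, ψ⟩ = ⟨x, φψ⟩`.  Then the canonical image of `B_X = B* ⊕₁ B` is a right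
ideal in `(B_X)**` (first Arens product) if and only if `B` is Arens regular. -/
theorem statement16
    {B : Type*} [NormedAddCommGroup B] [NormedSpace ℂ B] [CompleteSpace B]
    (mB : B →L[ℂ] B →L[ℂ] B) (hB : IsBanachAlgebra mB)
    (hBrideal : ∀ (b : B) (m : Bidual B), arens1 mB (iota B b) m ∈ Set.range (iota B))
    -- the natural right action of `B` on `X = B*`:
    (sm : StrongDual ℂ B →L[ℂ] B →L[ℂ] StrongDual ℂ B)
    (hsm : ∀ (x : StrongDual ℂ B) (φ ψ : B), sm x φ ψ = x (mB φ ψ))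
    (mBX : WithLp 1 (StrongDual ℂ B × B) →L[ℂ] WithLp 1 (StrongDual ℂ B × B) →L[ℂ]
      WithLp 1 (StrongDual ℂ B × B))
    (hmBX : ∀ u v : WithLp 1 (StrongDual ℂ B × B),
      WithLp.equiv 1 (StrongDual ℂ B × B) (mBX u v) =
        (sm (WithLp.equiv 1 (StrongDual ℂ B × B) u).1 (WithLp.equiv 1 (StrongDual ℂ B × B) v).2,
         mB (WithLp.equiv 1 (StrongDual ℂ B × B) u).2 (WithLp.equiv 1 (StrongDual ℂ B × B) v).2)) :
    (∀ (u : WithLp 1 (StrongDual ℂ B × B)) (m : Bidual (WithLp 1 (StrongDual ℂ B × B))),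
      arens1 mBX (iota (WithLp 1 (StrongDual ℂ B × B)) u) m
        ∈ Set.range (iota (WithLp 1 (StrongDual ℂ B × B))))
      ↔ ArensRegular mB :=
  statement16_general mB hBrideal sm hsm mBX hmBX

end ArensNote
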